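/- For the integer lattice ℤ³ scaled by 2 (i.e., Λ = 2ℤ³, minimal distance 2), the maximum number of touching pairs among n = k³ points (k ≥ 1) equals 3k³ − 3k², attained by the k×k×k cube of lattice points. -/

import Mathlib

open scoped Classical

noncomputable section

/-- Number of unordered touching pairs (distance exactly 2) in a finite point set. -/
def touchingPairs (S : Finset (EuclideanSpace ℝ (Fin 3))) : ℕ :=
  (S.sym2.filter fun p => ¬ p.IsDiag ∧ ∃ x y, p = s(x, y) ∧ dist x y = 2).card

/-- The lattice 2ℤ³ inside ℝ³. -/
def doubledIntLattice : Set (EuclideanSpace ℝ (Fin 3)) :=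
  {x | ∀ i : Fin 3, ∃ m : ℤ, x i = 2 * m}

/-!
Identify `2ℤ³` with `ℤ³` through `v ↦ 2v`: two lattice points touch exactly when they differ by a
unit vector `eᵢ`, so the touching pairs of `A ⊆ ℤ³` are counted by the `x ∈ A` with `x + eᵢ ∈ A`.
On every line parallel to `eᵢ` that meets `A` there are fewer such `x` than points of `A`, hence
at most `|A| - |πᵢ A|` of them in direction `i`, where `πᵢ` forgets the `i`-th coordinate (encoded as
`Function.update · i 0`). The Loomis–Whitney inequality `|A|² ≤ |π₀ A| |π₁ A| |π₂ A|` and AM–GM give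
`∑ |πᵢ A| ≥ 3k²` when `|A| = k³`, so there are at most `3k³ - 3k²` touching pairs, and the cube
`{0, …, k-1}³` has exactly that many.
-/

open Finset

theorem Function.update_eq_update_iff {ι α : Type*} [DecidableEq ι] {x y : ι → α} {i : ι}
    {a : α} : Function.update x i a = Function.update y i a ↔ ∀ j ≠ i, x j = y j := by
  rw [Function.update_eq_iff]
  simp +contextual [Function.update_of_ne]

theorem Function.update_add_single {ι M : Type*} [DecidableEq ι] [AddZeroClass M] (x : ι → M)
    (i : ι) (c a : M) : Function.update (x + Pi.single i c) i a = Function.update x i a :=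
  Function.update_eq_update_iff.mpr fun j hj => by simp [hj]

theorem Int.sum_sq_eq_one_iff {ι : Type*} [Fintype ι] [DecidableEq ι] {u : ι → ℤ} :
    ∑ j, u j ^ 2 = 1 ↔ ∃ i, u = Pi.single i 1 ∨ u = Pi.single i (-1) := by
  refine ⟨fun h => ?_, ?_⟩
  · obtain ⟨i, hi⟩ : ∃ i, u i ≠ 0 := by
      by_contra! h0
      simp [h0] at h
    rw [← add_sum_erase _ _ (mem_univ i)] at h
    have hrest : ∑ j ∈ univ.erase i, u j ^ 2 = 0 := by
      have := sum_nonneg fun j (_ : j ∈ univ.erase i) => sq_nonneg (u j)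
      have : 0 < u i ^ 2 := by positivity
      omega
    have hzero : ∀ j ≠ i, u j = 0 := fun j hj =>
      pow_eq_zero_iff two_ne_zero |>.mp <| (sum_eq_zero_iff_of_nonneg fun j _ => sq_nonneg (u j)).mp
        hrest j (mem_erase.mpr ⟨hj, mem_univ j⟩)
    have hu : u = Pi.single i (u i) := funext fun j => by
      by_cases hj : j = i
      · simp [hj]
      · simp [hj, hzero j hj]
    refine ⟨i, ?_⟩
    rcases sq_eq_one_iff.mp (show u i ^ 2 = 1 by omega) with h1 | h1 <;> rw [h1] at hu <;> simp [hu]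
  · rintro ⟨i, rfl | rfl⟩ <;> simp [Pi.single_apply, apply_ite (· ^ 2)]

theorem sq_sum_le_mul_sum_mul_sum {ι : Type*} (s : Finset ι) {c a b : ι → ℕ} {L : ℕ}
    (hL : ∀ z ∈ s, c z ≤ L) (hab : ∀ z ∈ s, c z ≤ a z * b z) :
    (∑ z ∈ s, c z) ^ 2 ≤ L * (∑ z ∈ s, a z) * ∑ z ∈ s, b z := by
  rw [mul_sum (f := a)]
  refine sum_sq_le_sum_mul_sum_of_sq_le_mul s (fun _ _ => Nat.zero_le _)
    (fun _ _ => Nat.zero_le _) fun z hz => ?_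
  rw [sq, mul_assoc]
  exact Nat.mul_le_mul (hL z hz) (hab z hz)

theorem three_mul_sq_le_add_add {n a b c : ℕ} (h : n ^ 6 ≤ a * b * c) :
    3 * n ^ 2 ≤ a + b + c := by
  have amgm : 27 * (a * b * c) ≤ (a + b + c) ^ 3 := by
    zify
    nlinarith [mul_nonneg (Int.natCast_nonneg a) (sq_nonneg ((b : ℤ) - c)),
      mul_nonneg (Int.natCast_nonneg b) (sq_nonneg ((a : ℤ) - c)),
      mul_nonneg (Int.natCast_nonneg c) (sq_nonneg ((a : ℤ) - b))]
  refine le_of_pow_le_pow_left₀ three_ne_zero (Nat.zero_le _) ?_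
  calc (3 * n ^ 2) ^ 3 = 27 * n ^ 6 := by ring
    _ ≤ 27 * (a * b * c) := by gcongr
    _ ≤ (a + b + c) ^ 3 := amgm

theorem not_isDiag_and_exists_dist_eq_iff {X : Type*} [MetricSpace X] {r : ℝ} (hr : r ≠ 0)
    {a b : X} : (¬ s(a, b).IsDiag ∧ ∃ x y, s(a, b) = s(x, y) ∧ dist x y = r) ↔ dist a b = r := by
  refine ⟨?_, fun hd => ⟨fun hdiag => ?_, a, b, rfl, hd⟩⟩
  · rintro ⟨-, x, y, hxy, hd⟩
    rcases Sym2.eq_iff.mp hxy with ⟨rfl, rfl⟩ | ⟨rfl, rfl⟩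
    · exact hd
    · rwa [dist_comm]
  · rw [Sym2.mk_isDiag_iff] at hdiag
    exact hr (by simpa [hdiag] using hd.symm)

section IntLattice

variable {ι : Type*}

def lowerEndpoints [Fintype ι] [DecidableEq ι] (A : Finset (ι → ℤ)) (i : ι) : Finset (ι → ℤ) :=
  {x ∈ A | x + Pi.single i 1 ∈ A}

theorem add_single_add_single_ne_self [DecidableEq ι] (x : ι → ℤ) (i j : ι) :
    x + Pi.single i 1 + Pi.single j 1 ≠ x := by
  intro h
  have := congrFun h j
  by_cases hij : j = i
  · simp only [hij, Pi.add_apply, Pi.single_eq_same] at this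
    omega
  · simp [hij] at this

theorem card_lowerEndpoints_add_card_image_update_le [Fintype ι] [DecidableEq ι]
    (A : Finset (ι → ℤ)) (i : ι) :
    #(lowerEndpoints A i) + #(A.image (Function.update · i 0)) ≤ #A := by
  -- the topmost point of `A` on each line parallel to `eᵢ` is not a lower endpoint
  have hsurj : Set.SurjOn (Function.update · i (0 : ℤ))
      (A.filter (· + Pi.single i 1 ∉ A) : Set (ι → ℤ)) (A.image (Function.update · i 0)) := by
    intro p hp
    obtain ⟨x, hx, rfl⟩ := mem_image.mp hp
    obtain ⟨y, hy, hmax⟩ := exists_max_image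
      {y ∈ A | Function.update y i 0 = Function.update x i 0} (· i) ⟨x, mem_filter.mpr ⟨hx, rfl⟩⟩
    rw [mem_filter] at hy
    refine ⟨y, mem_filter.mpr ⟨hy.1, fun hy' => ?_⟩, hy.2⟩
    have := hmax _ (mem_filter.mpr ⟨hy', by rw [Function.update_add_single, hy.2]⟩)
    simp at this
  have := card_le_card_of_surjOn _ hsurj
  have := card_filter_add_card_filter_not (s := A) (· + Pi.single i 1 ∈ A)
  unfold lowerEndpoints
  omega

def doubledPoint (v : ι → ℤ) : EuclideanSpace ℝ ι :=
  WithLp.toLp 2 fun i => 2 * (v i : ℝ)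

theorem doubledPoint_injective : Function.Injective (doubledPoint (ι := ι)) := fun v w h =>
  funext fun i => by simpa [doubledPoint] using congrArg (· i) h

theorem dist_doubledPoint_sq [Fintype ι] (v w : ι → ℤ) :
    dist (doubledPoint v) (doubledPoint w) ^ 2 = 4 * ((∑ j, (v j - w j) ^ 2 : ℤ) : ℝ) := by
  rw [EuclideanSpace.dist_eq, Real.sq_sqrt (by positivity)]
  push_cast
  rw [mul_sum]
  refine sum_congr rfl fun j _ => ?_
  simp only [doubledPoint, Real.dist_eq, sq_abs]
  ring

theorem dist_doubledPoint_eq_two_iff [Fintype ι] [DecidableEq ι] (v w : ι → ℤ) :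
    dist (doubledPoint v) (doubledPoint w) = 2 ↔
      ∃ i, w = v + Pi.single i 1 ∨ v = w + Pi.single i 1 := by
  have hsq : dist (doubledPoint v) (doubledPoint w) = 2 ↔ ∑ j, (v - w) j ^ 2 = 1 := by
    rw [← sq_eq_sq₀ dist_nonneg zero_le_two, dist_doubledPoint_sq]
    norm_cast
    simp only [Pi.sub_apply]
    omega
  rw [hsq, Int.sum_sq_eq_one_iff]
  refine exists_congr fun i => ?_
  rw [Pi.single_neg, sub_eq_iff_eq_add', ← neg_eq_iff_eq_neg, neg_sub, sub_eq_iff_eq_add', or_comm]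

def intCube (ι : Type*) [Fintype ι] [DecidableEq ι] (k : ℕ) : Finset (ι → ℤ) :=
  Fintype.piFinset fun _ => Ico (0 : ℤ) k

theorem card_intCube [Fintype ι] [DecidableEq ι] (k : ℕ) :
    #(intCube ι k) = k ^ Fintype.card ι := by
  simp [intCube]

theorem lowerEndpoints_intCube [Fintype ι] [DecidableEq ι] (k : ℕ) (i : ι) :
    lowerEndpoints (intCube ι k) i =
      Fintype.piFinset (Function.update (fun _ => Ico (0 : ℤ) k) i (Ico 0 (k - 1))) := by
  ext x
  simp only [lowerEndpoints, intCube, mem_filter, Fintype.mem_piFinset, ← forall_and]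
  refine forall_congr' fun j => ?_
  by_cases hj : j = i
  · subst hj
    simp only [mem_Ico, Pi.add_apply, Pi.single_eq_same, Function.update_self]
    omega
  · simp [hj]

theorem card_lowerEndpoints_intCube [Fintype ι] [DecidableEq ι] (k : ℕ) (i : ι) :
    #(lowerEndpoints (intCube ι k) i) = (k - 1) * k ^ (Fintype.card ι - 1) := by
  rw [lowerEndpoints_intCube, Fintype.card_piFinset]
  simp only [Function.apply_update (fun _ => Finset.card)]
  rw [prod_update_of_mem (mem_univ i)]
  simp [Int.card_Ico, ← compl_eq_univ_sdiff, card_compl]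

end IntLattice

theorem card_sq_le_prod_card_image_update (A : Finset (Fin 3 → ℤ)) :
    #A ^ 2 ≤ ∏ i, #(A.image (Function.update · i 0)) := by
  -- Each slice `{x ∈ A | x 0 = z}` injects into `π₀ A` and into the product of its `π₁`- and
  -- `π₂`-images; Cauchy–Schwarz over the slices finishes.
  have hslice_proj : ∀ z ∈ A.image (· 0),
      #{x ∈ A | x 0 = z} ≤ #(A.image (Function.update · 0 0)) := by
    refine fun z _ => card_le_card_of_injOn _ (fun x hx => mem_image_of_mem _ (mem_filter.mp hx).1)
      fun x hx y hy hxy => funext fun j => ?_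
    rw [mem_coe, mem_filter] at hx hy
    by_cases hj : j = 0
    · rw [hj, hx.2, hy.2]
    · exact Function.update_eq_update_iff.mp hxy j hj
  have hslice_prod : ∀ z ∈ A.image (· 0), #{x ∈ A | x 0 = z} ≤
      #{p ∈ A.image (Function.update · 1 0) | p 0 = z} *
        #{p ∈ A.image (Function.update · 2 0) | p 0 = z} := by
    refine fun z _ => (card_le_card_of_injOn
      (fun x => (Function.update x 1 0, Function.update x 2 0)) (fun x hx => ?_)
      fun x _ y _ hxy => funext fun j => ?_).trans_eq (card_product _ _)
    · rw [mem_coe, mem_filter] at hx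
      have hmem (i : Fin 3) (hi : i ≠ 0) : Function.update x i 0 ∈
          {p ∈ A.image (Function.update · i 0) | p 0 = z} :=
        mem_filter.mpr ⟨mem_image_of_mem _ hx.1, by rw [Function.update_of_ne hi.symm, hx.2]⟩
      exact mem_product.mpr ⟨hmem 1 (by decide), hmem 2 (by decide)⟩
    · simp only [Prod.mk.injEq, Function.update_eq_update_iff] at hxy
      by_cases hj : j = 1
      · exact hxy.2 j (by rw [hj]; decide)
      · exact hxy.1 j hj
  have hfiber : ∀ i ≠ 0, #(A.image (Function.update · i 0)) =
      ∑ z ∈ A.image (· 0), #{p ∈ A.image (Function.update · i 0) | p 0 = z} := by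
    refine fun i hi => card_eq_sum_card_fiberwise fun p hp => ?_
    obtain ⟨x, hx, rfl⟩ := mem_image.mp hp
    simpa [Function.update_of_ne hi.symm] using mem_image_of_mem _ hx
  rw [Fin.prod_univ_three, card_eq_sum_card_image (· 0) A, hfiber 1 (by decide),
    hfiber 2 (by decide)]
  exact sq_sum_le_mul_sum_mul_sum _ hslice_proj hslice_prod

theorem sum_card_lowerEndpoints_le {A : Finset (Fin 3 → ℤ)} {k : ℕ} (hA : #A = k ^ 3) :
    ∑ i, #(lowerEndpoints A i) ≤ 3 * k ^ 3 - 3 * k ^ 2 := by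
  have hlines : ∑ i, (#(lowerEndpoints A i) + #(A.image (Function.update · i 0))) ≤
      ∑ _i : Fin 3, #A :=
    sum_le_sum fun i _ => card_lowerEndpoints_add_card_image_update_le A i
  have hproj : 3 * k ^ 2 ≤ ∑ i, #(A.image (Function.update · i 0)) := by
    rw [Fin.sum_univ_three]
    refine three_mul_sq_le_add_add ?_
    calc k ^ 6 = #A ^ 2 := by rw [hA]; ring
      _ ≤ _ := card_sq_le_prod_card_image_update A
      _ = _ := Fin.prod_univ_three _
  rw [sum_add_distrib, sum_const, card_univ, Fintype.card_fin, smul_eq_mul, hA] at hlines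
  omega

theorem touchingPairs_image_doubledPoint (A : Finset (Fin 3 → ℤ)) :
    touchingPairs (A.image doubledPoint) = ∑ i, #(lowerEndpoints A i) := by
  rw [← card_sigma, touchingPairs]
  refine (card_bij (fun p _ => s(doubledPoint p.2, doubledPoint (p.2 + Pi.single p.1 1)))
    ?_ ?_ ?_).symm
  · rintro ⟨i, x⟩ hx
    rw [mem_sigma, lowerEndpoints, mem_filter] at hx
    rw [mem_filter, mk_mem_sym2_iff, not_isDiag_and_exists_dist_eq_iff two_ne_zero,
      dist_doubledPoint_eq_two_iff]
    exact ⟨⟨mem_image_of_mem _ hx.2.1, mem_image_of_mem _ hx.2.2⟩, i, Or.inl rfl⟩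
  · rintro ⟨i, x⟩ _ ⟨j, y⟩ _ h
    rcases Sym2.eq_iff.mp h with ⟨hxy, hij⟩ | ⟨hxy, hyx⟩
    · obtain rfl := doubledPoint_injective hxy
      have hsingle := congrFun (add_left_cancel (doubledPoint_injective hij)) i
      obtain rfl : i = j := by simpa [Pi.single_apply, eq_comm] using hsingle
      rfl
    · exact absurd (doubledPoint_injective hxy ▸ doubledPoint_injective hyx)
        (add_single_add_single_ne_self y j i)
  · intro e he
    induction e using Sym2.ind with | _ a b => ?_
    rw [mem_filter, mk_mem_sym2_iff, not_isDiag_and_exists_dist_eq_iff two_ne_zero] at he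
    obtain ⟨⟨ha, hb⟩, hd⟩ := he
    obtain ⟨v, hv, rfl⟩ := mem_image.mp ha
    obtain ⟨w, hw, rfl⟩ := mem_image.mp hb
    rcases (dist_doubledPoint_eq_two_iff v w).mp hd with ⟨i, rfl | rfl⟩
    · exact ⟨⟨i, v⟩, mem_sigma.mpr ⟨mem_univ _, mem_filter.mpr ⟨hv, hw⟩⟩, rfl⟩
    · exact ⟨⟨i, w⟩, mem_sigma.mpr ⟨mem_univ _, mem_filter.mpr ⟨hw, hv⟩⟩, Sym2.eq_swap⟩

theorem doubledIntLattice_eq_range :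
    doubledIntLattice = Set.range (doubledPoint (ι := Fin 3)) := by
  ext x
  refine ⟨fun hx => ?_, ?_⟩
  · choose m hm using hx
    exact ⟨m, by ext i; simp [doubledPoint, hm]⟩
  · rintro ⟨v, rfl⟩ i
    exact ⟨v i, rfl⟩

theorem touchingPairs_intCube (k : ℕ) :
    touchingPairs ((intCube (Fin 3) k).image doubledPoint) = 3 * k ^ 3 - 3 * k ^ 2 := by
  simp only [touchingPairs_image_doubledPoint, card_lowerEndpoints_intCube, Fintype.card_fin,
    sum_const, card_univ, smul_eq_mul]
  rw [Nat.sub_one_mul, Nat.mul_sub, ← pow_succ']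

theorem max_contact_cube_general (k : ℕ) :
    IsGreatest {m : ℕ | ∃ S : Finset (EuclideanSpace ℝ (Fin 3)),
        (S : Set (EuclideanSpace ℝ (Fin 3))) ⊆ doubledIntLattice ∧
          S.card = k ^ 3 ∧ touchingPairs S = m}
      (3 * k ^ 3 - 3 * k ^ 2) := by
  refine ⟨⟨(intCube (Fin 3) k).image doubledPoint, ?_, ?_, touchingPairs_intCube k⟩, ?_⟩
  · rw [coe_image, doubledIntLattice_eq_range]
    exact Set.image_subset_range _ _
  · rw [card_image_of_injective _ doubledPoint_injective, card_intCube, Fintype.card_fin]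
  · rintro m ⟨S, hS, hcard, rfl⟩
    rw [doubledIntLattice_eq_range, ← Set.image_univ] at hS
    obtain ⟨A, -, rfl⟩ := subset_set_image_iff.mp hS
    rw [card_image_of_injective _ doubledPoint_injective] at hcard
    rw [touchingPairs_image_doubledPoint]
    exact sum_card_lowerEndpoints_le hcard

theorem max_contact_cube (k : ℕ) (hk : 1 ≤ k) :
    IsGreatest {m : ℕ | ∃ S : Finset (EuclideanSpace ℝ (Fin 3)),
        (S : Set (EuclideanSpace ℝ (Fin 3))) ⊆ doubledIntLattice ∧
          S.card = k ^ 3 ∧ touchingPairs S = m}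
      (3 * k ^ 3 - 3 * k ^ 2) :=
  max_contact_cube_general k

end
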